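/- Let ρ be a density matrix on ℂ^d and A, B Hermitian d×d complex matrices, not both scalar multiples of the identity in the sense that K ≠ 0, where K = (C − s·i·D)(C + s·i·D) with C = A − Tr(ρA)·I, D = B − Tr(ρB)·I and the sign s ∈ {+1, −1} chosen such that s·i·Tr(ρ[A,B]) = −|Tr(ρ[A,B])|. Set λ = Tr(K) (a positive real) and σ = K/λ, which is a density matrix. Then ΔA² + ΔB² ≤ |Tr(ρ[A,B])| + λ·F(ρ, σ)². -/

import Mathlib

/-!
The matrix `K = (C - s i D)(C + s i D)` equals `Mᴴ M` for `M = C + s i D`, so it is positive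
semidefinite, and expanding it gives `Tr(ρK) = ΔA² + ΔB² + s i Tr(ρ[A,B]) = ΔA² + ΔB² - |Tr(ρ[A,B])|`.
It remains to bound `Tr(ρK) = λ Tr(ρσ)` by `λ F(ρ,σ)²`. With `P = √ρ σ √ρ ⪰ 0` we have
`Tr(ρσ) = Tr P = Tr((√P)²) ≤ (Tr √P)² = F(ρ,σ)²`, since `Tr(X²) = ∑ μᵢ² ≤ (∑ μᵢ)² = (Tr X)²`
for a positive semidefinite `X` with eigenvalues `μᵢ ≥ 0`.
-/

open Matrix Complex
open scoped ComplexOrder Classical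

/-- The positive semidefinite square root of a matrix (junk value `0` off the PSD matrices). -/
noncomputable def msqrt {d : ℕ} (A : Matrix (Fin d) (Fin d) ℂ) : Matrix (Fin d) (Fin d) ℂ :=
  if h : A.PosSemidef then
    (h.1.eigenvectorUnitary : Matrix (Fin d) (Fin d) ℂ) *
      diagonal (((↑) : ℝ → ℂ) ∘ (Real.sqrt ·) ∘ h.1.eigenvalues) *
      (star h.1.eigenvectorUnitary : Matrix (Fin d) (Fin d) ℂ)
  else 0

/-- Fidelity `F(ρ,σ) = Tr √(√ρ·σ·√ρ)` of density matrices. -/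
noncomputable def fidelity {d : ℕ} (ρ σ : Matrix (Fin d) (Fin d) ℂ) : ℝ :=
  ((msqrt (msqrt ρ * σ * msqrt ρ)).trace).re

open scoped MatrixOrder

section Algebra

variable {S R : Type*} [CommRing S] [Ring R] [Algebra S R]

lemma sub_smul_mul_add_smul (C D : R) (t : S) :
    (C - t • D) * (C + t • D) = C * C - t ^ 2 • (D * D) + t • (C * D - D * C) := by
  simp only [sub_mul, mul_add, smul_mul_assoc, mul_smul_comm, smul_smul, sq, smul_sub]
  abel

lemma commutator_sub_smul_one (A B : R) (a b : S) :
    (A - a • 1) * (B - b • 1) - (B - b • 1) * (A - a • 1) = A * B - B * A := by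
  simp only [mul_sub, sub_mul, smul_mul_assoc, mul_smul_comm, one_mul, mul_one, smul_sub,
    smul_smul, mul_comm a b]
  abel

end Algebra

namespace Matrix

variable {n : Type*} [Fintype n]

section CommRing

variable {R : Type*} [CommRing R] [DecidableEq n] {ρ : Matrix n n R}

lemma trace_mul_sub_smul_one_mul_self (hρ : ρ.trace = 1) (A : Matrix n n R) :
    (ρ * ((A - (ρ * A).trace • 1) * (A - (ρ * A).trace • 1))).trace
      = (ρ * (A * A)).trace - (ρ * A).trace ^ 2 := by
  simp only [mul_sub, sub_mul, smul_mul_assoc, mul_smul_comm, one_mul, mul_one,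
    trace_sub, trace_smul, hρ, smul_eq_mul]
  ring

lemma trace_mul_uncertainty (hρ : ρ.trace = 1) (A B : Matrix n n R) {t : R} (ht : t ^ 2 = -1) :
    (ρ * ((A - (ρ * A).trace • 1 - t • (B - (ρ * B).trace • 1))
      * (A - (ρ * A).trace • 1 + t • (B - (ρ * B).trace • 1)))).trace
      = ((ρ * (A * A)).trace - (ρ * A).trace ^ 2) + ((ρ * (B * B)).trace - (ρ * B).trace ^ 2)
        + t * (ρ * (A * B - B * A)).trace := by
  rw [sub_smul_mul_add_smul, ht, commutator_sub_smul_one, Matrix.mul_add, Matrix.mul_sub,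
    Matrix.mul_smul, Matrix.mul_smul, trace_add, trace_sub, trace_smul, trace_smul,
    trace_mul_sub_smul_one_mul_self hρ, trace_mul_sub_smul_one_mul_self hρ, smul_eq_mul,
    smul_eq_mul]
  ring

end CommRing

variable {𝕜 : Type*} [RCLike 𝕜]

lemma IsHermitian.star_trace_mul {A B : Matrix n n 𝕜} (hA : A.IsHermitian) (hB : B.IsHermitian) :
    star (A * B).trace = (A * B).trace := by
  rw [← trace_conjTranspose, conjTranspose_mul, hA.eq, hB.eq, trace_mul_comm]

lemma IsHermitian.sub_smul_one [DecidableEq n] {A : Matrix n n 𝕜} (hA : A.IsHermitian) {c : 𝕜}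
    (hc : star c = c) : (A - c • 1).IsHermitian :=
  IsSelfAdjoint.sub hA (IsSelfAdjoint.smul hc (IsSelfAdjoint.one _))

lemma posSemidef_sub_smul_mul_add_smul {C D : Matrix n n 𝕜} (hC : C.IsHermitian)
    (hD : D.IsHermitian) {t : 𝕜} (ht : star t = -t) : ((C - t • D) * (C + t • D)).PosSemidef := by
  have : (C + t • D)ᴴ = C - t • D := by
    rw [conjTranspose_add, conjTranspose_smul, hC.eq, hD.eq, ht, neg_smul, sub_eq_add_neg]
  simpa only [this] using posSemidef_conjTranspose_mul_self (C + t • D)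

lemma PosSemidef.re_trace_pos {A : Matrix n n 𝕜} (hA : A.PosSemidef) (hA0 : A ≠ 0) :
    0 < RCLike.re A.trace :=
  (RCLike.pos_iff.mp <| hA.trace_nonneg.lt_of_ne <| Ne.symm <| mt hA.trace_eq_zero_iff.mp hA0).1

lemma IsHermitian.trace_cfc [DecidableEq n] {A : Matrix n n 𝕜} (hA : A.IsHermitian)
    (f : ℝ → ℝ) : (cfc f A).trace = ∑ i, (f (hA.eigenvalues i) : 𝕜) := by
  rw [hA.cfc_eq, IsHermitian.cfc, Unitary.conjStarAlgAut_apply, trace_mul_cycle,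
    Unitary.coe_star_mul_self, one_mul, trace_diagonal]
  rfl

lemma PosSemidef.re_trace_mul_self_le_sq [DecidableEq n] {A : Matrix n n 𝕜}
    (hA : A.PosSemidef) : RCLike.re (A * A).trace ≤ RCLike.re A.trace ^ 2 := by
  have hsq : A * A = cfc (· ^ 2 : ℝ → ℝ) A := by
    rw [cfc_pow_id A 2 hA.1.isSelfAdjoint, sq]
  rw [hsq, hA.1.trace_cfc, hA.1.trace_eq_sum_eigenvalues]
  simp only [map_sum, RCLike.ofReal_re]
  exact Finset.sum_sq_le_sq_sum_of_nonneg fun i _ ↦ hA.eigenvalues_nonneg i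

end Matrix

lemma msqrt_eq_sqrt {d : ℕ} {A : Matrix (Fin d) (Fin d) ℂ} (hA : A.PosSemidef) :
    msqrt A = CFC.sqrt A := by
  rw [msqrt, dif_pos hA, CFC.sqrt_eq_cfc, cfc_nnreal_eq_real _ A hA.nonneg, hA.1.cfc_eq,
    IsHermitian.cfc, Unitary.conjStarAlgAut_apply]
  congr 3
  ext i
  simp [hA.eigenvalues_nonneg i]

lemma re_trace_mul_le_fidelity_sq {d : ℕ} {ρ σ : Matrix (Fin d) (Fin d) ℂ}
    (hρ : ρ.PosSemidef) (hσ : σ.PosSemidef) : (ρ * σ).trace.re ≤ fidelity ρ σ ^ 2 := by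
  set P := CFC.sqrt ρ * σ * CFC.sqrt ρ
  have hP : P.PosSemidef := by
    simpa only [(CFC.sqrt_nonneg ρ).posSemidef.1.eq] using
      hσ.conjTranspose_mul_mul_same (CFC.sqrt ρ)
  have htr : (ρ * σ).trace = P.trace := by
    rw [← CFC.sqrt_mul_sqrt_self ρ hρ.nonneg, Matrix.mul_assoc, trace_mul_comm]
  calc (ρ * σ).trace.re = (CFC.sqrt P * CFC.sqrt P).trace.re := by
        rw [CFC.sqrt_mul_sqrt_self P hP.nonneg, htr]
    _ ≤ (CFC.sqrt P).trace.re ^ 2 := (CFC.sqrt_nonneg P).posSemidef.re_trace_mul_self_le_sq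
    _ = fidelity ρ σ ^ 2 := by rw [fidelity, msqrt_eq_sqrt hρ, msqrt_eq_sqrt hP]

theorem stmt6 {d : ℕ} (ρ : Matrix (Fin d) (Fin d) ℂ)
    (hρ : ρ.PosSemidef) (hρtr : ρ.trace = 1)
    (A B : Matrix (Fin d) (Fin d) ℂ) (hA : A.IsHermitian) (hB : B.IsHermitian)
    (s : ℂ) (hs : s = 1 ∨ s = -1)
    (hsign : s * Complex.I * (ρ * (A * B - B * A)).trace
      = -(‖(ρ * (A * B - B * A)).trace‖ : ℂ))
    (C D K : Matrix (Fin d) (Fin d) ℂ)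
    (hC : C = A - (ρ * A).trace • (1 : Matrix (Fin d) (Fin d) ℂ))
    (hD : D = B - (ρ * B).trace • (1 : Matrix (Fin d) (Fin d) ℂ))
    (hK : K = (C - (s * Complex.I) • D) * (C + (s * Complex.I) • D))
    (hKne : K ≠ 0)
    (lam : ℝ) (hlam : lam = (K.trace).re)
    (σ : Matrix (Fin d) (Fin d) ℂ) (hσ : σ = ((lam : ℂ))⁻¹ • K) :
    0 < lam ∧ σ.PosSemidef ∧ σ.trace = 1 ∧
    ((ρ * (A * A)).trace - (ρ * A).trace ^ 2).re
      + ((ρ * (B * B)).trace - (ρ * B).trace ^ 2).re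
    ≤ ‖(ρ * (A * B - B * A)).trace‖ + lam * (fidelity ρ σ) ^ 2 := by
  have hsI : star (s * I) = -(s * I) := by rcases hs with rfl | rfl <;> simp
  have hsI_sq : (s * I) ^ 2 = -1 := by rcases hs with rfl | rfl <;> simp
  have hKpsd : K.PosSemidef := hK ▸ posSemidef_sub_smul_mul_add_smul
    (hC ▸ hA.sub_smul_one (hρ.1.star_trace_mul hA))
    (hD ▸ hB.sub_smul_one (hρ.1.star_trace_mul hB)) hsI
  have hlam0 : 0 < lam := hlam ▸ hKpsd.re_trace_pos hKne
  have hlam0' : (lam : ℂ) ≠ 0 := by exact_mod_cast hlam0.ne'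
  have hσpsd : σ.PosSemidef := by
    rw [hσ, ← ofReal_inv]
    exact hKpsd.smul (zero_le_real.mpr (inv_nonneg.mpr hlam0.le))
  have hσtr : σ.trace = 1 := by
    rw [hσ, trace_smul, eq_re_of_ofReal_le hKpsd.trace_nonneg, ← hlam, smul_eq_mul,
      inv_mul_cancel₀ hlam0']
  have hρK : ((ρ * (A * A)).trace - (ρ * A).trace ^ 2) + ((ρ * (B * B)).trace - (ρ * B).trace ^ 2)
      = (ρ * K).trace + ‖(ρ * (A * B - B * A)).trace‖ := by
    rw [hK, hC, hD, trace_mul_uncertainty hρtr A B hsI_sq, hsign]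
    ring
  refine ⟨hlam0, hσpsd, hσtr, ?_⟩
  rw [← add_re, hρK, ← smul_inv_smul₀ hlam0' K, ← hσ, Matrix.mul_smul, trace_smul, smul_eq_mul,
    add_re, re_ofReal_mul, ofReal_re, add_comm]
  gcongr
  exact re_trace_mul_le_fidelity_sq hρ hσpsd
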